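/- arXiv:1504.01130 — 2 statements merged into one kernel-verified Lean document; each statement's English description precedes it below -/
import Mathlib

section
/- For every odd K ≥ 3 and every x ∈ ℝ^K (indices taken mod K), both of the following identities hold: (i) Σ_{k=0}^{K-1} Σ_{i1 odd, 1 ≤ i1 < K−2} ((K−i1−2)/2) Σ_{i1<i2<K, i2 even} x_k x_{(i1+k) mod K} x_{(i2+k) mod K} = (K−3)·f3^(K)(x); (ii) Σ_{k=0}^{K-1} Σ_{i1 odd, 1 ≤ i1 < K−2} ((K−i1−2)/2) Σ_{i1<i2<i3<i4<K, i2 and i4 even, i3 odd} x_k x_{(i1+k) mod K} x_{(i2+k) mod K} x_{(i3+k) mod K} x_{(i4+k) mod K} = (2K−5)·f5^(K)(x). -/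
/-- `f3^(K)(x) = Σ x_{i0} x_{i1} x_{i2}` over `0 ≤ i0 < i1 < i2 < K` with
`i1 - i0` and `i2 - i1` odd. -/
def f3 (K : ℕ) (x : Fin K → ℝ) : ℝ :=
  ∑ t ∈ Finset.univ.filter
      (fun t : Fin K × Fin K × Fin K =>
        t.1 < t.2.1 ∧ t.2.1 < t.2.2 ∧
        Odd (t.2.1.val - t.1.val) ∧ Odd (t.2.2.val - t.2.1.val)),
    x t.1 * x t.2.1 * x t.2.2

/-- `f5^(K)(x) = Σ x_{i0} x_{i1} x_{i2} x_{i3} x_{i4}` over `0 ≤ i0 < ⋯ < i4 < K`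
with all consecutive differences odd. -/
def f5 (K : ℕ) (x : Fin K → ℝ) : ℝ :=
  ∑ t ∈ Finset.univ.filter
      (fun t : Fin K × Fin K × Fin K × Fin K × Fin K =>
        t.1 < t.2.1 ∧ t.2.1 < t.2.2.1 ∧ t.2.2.1 < t.2.2.2.1 ∧ t.2.2.2.1 < t.2.2.2.2 ∧
        Odd (t.2.1.val - t.1.val) ∧ Odd (t.2.2.1.val - t.2.1.val) ∧
        Odd (t.2.2.2.1.val - t.2.2.1.val) ∧ Odd (t.2.2.2.2.val - t.2.2.2.1.val)),
    x t.1 * x t.2.1 * x t.2.2.1 * x t.2.2.2.1 * x t.2.2.2.2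

/-- `f^(K) := f3^(K) - 24 · f5^(K)`. -/
def fHerman (K : ℕ) (x : Fin K → ℝ) : ℝ := f3 K x - 24 * f5 K x

/-- The standard `(K-1)`-simplex `D^(K)`:
vectors `x ∈ [0,1]^K` with `x_0 + ⋯ + x_{K-1} = 1`. -/
def simplexD (K : ℕ) : Set (Fin K → ℝ) :=
  {x | (∀ i, 0 ≤ x i ∧ x i ≤ 1) ∧ ∑ i, x i = 1}

lemma addval {K : ℕ} (a b : Fin K) :
    a.val < K ∧ b.val < K ∧
      ((a.val + b.val < K ∧ (a + b).val = a.val + b.val) ∨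
       (K ≤ a.val + b.val ∧ (a + b).val + K = a.val + b.val)) := by
  refine ⟨a.isLt, b.isLt, ?_⟩
  rw [Fin.add_def]
  by_cases h : a.val + b.val < K
  · exact Or.inl ⟨h, Nat.mod_eq_of_lt h⟩
  · refine Or.inr ⟨by omega, ?_⟩
    show (a.val + b.val) % K + K = a.val + b.val
    rw [Nat.mod_eq_sub_mod (by omega), Nat.mod_eq_of_lt (by omega)]
    omega

lemma subval {K : ℕ} (a b : Fin K) :
    a.val < K ∧ b.val < K ∧
      ((b.val ≤ a.val ∧ (a - b).val = a.val - b.val) ∨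
       (a.val < b.val ∧ (a - b).val = a.val + K - b.val)) := by
  refine ⟨a.isLt, b.isLt, ?_⟩
  have hb := b.isLt
  have ha := a.isLt
  rw [Fin.sub_def]
  by_cases h : b.val ≤ a.val
  · refine Or.inl ⟨h, ?_⟩
    show (K - b.val + a.val) % K = a.val - b.val
    rw [Nat.mod_eq_sub_mod (by omega), Nat.mod_eq_of_lt (by omega)]
    omega
  · refine Or.inr ⟨by omega, ?_⟩
    show (K - b.val + a.val) % K = a.val + K - b.val
    rw [Nat.mod_eq_of_lt (by omega)]
    omega

def wv3 (K : ℕ) (t : Fin K × Fin K × Fin K) : Fin 3 → ℕ :=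
  ![t.2.1.val - t.1.val, t.2.2.val - t.2.1.val, K - (t.2.2.val - t.1.val)]

def psi3 (K : ℕ) [NeZero K] (p : (Fin K × Fin K × Fin K) × Fin 3) :
    Fin K × Fin K × Fin K :=
  ![(p.1.1, p.1.2.1 - p.1.1, p.1.2.2 - p.1.1),
    (p.1.2.1, p.1.2.2 - p.1.2.1, p.1.1 - p.1.2.1),
    (p.1.2.2, p.1.1 - p.1.2.2, p.1.2.1 - p.1.2.2)] p.2

def phi3 (K : ℕ) [NeZero K] (q : Fin K × Fin K × Fin K) :
    (Fin K × Fin K × Fin K) × Fin 3 :=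
  if q.1 < q.2.1 + q.1 then
    (if q.2.1 + q.1 < q.2.2 + q.1 then ((q.1, q.2.1 + q.1, q.2.2 + q.1), 0)
     else ((q.2.2 + q.1, q.1, q.2.1 + q.1), 1))
  else ((q.2.1 + q.1, q.2.2 + q.1, q.1), 2)

theorem part1 (K : ℕ) (hK : 3 ≤ K) (hKodd : Odd K) (x : Fin K → ℝ) :
    (∑ k : Fin K, ∑ p ∈ Finset.univ.filter
        (fun p : Fin K × Fin K =>
          Odd p.1.val ∧ 1 ≤ p.1.val ∧ p.1.val < K - 2 ∧
          p.1.val < p.2.val ∧ Even p.2.val),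
      (((K : ℝ) - p.1.val - 2) / 2) * (x k * x (p.1 + k) * x (p.2 + k)))
      = ((K : ℝ) - 3) * f3 K x := by
  haveI : NeZero K := ⟨by omega⟩
  have hK2 : K % 2 = 1 := Nat.odd_iff.mp hKodd
  have step1 : ∀ k : Fin K,
      (∑ p ∈ Finset.univ.filter
        (fun p : Fin K × Fin K =>
          Odd p.1.val ∧ 1 ≤ p.1.val ∧ p.1.val < K - 2 ∧
          p.1.val < p.2.val ∧ Even p.2.val),
      (((K : ℝ) - p.1.val - 2) / 2) * (x k * x (p.1 + k) * x (p.2 + k)))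
      = ∑ p ∈ Finset.univ.filter
        (fun p : Fin K × Fin K =>
          Odd p.1.val ∧ 1 ≤ p.1.val ∧ p.1.val < p.2.val ∧ Even p.2.val),
      (((K : ℝ) - p.1.val - 2) / 2) * (x k * x (p.1 + k) * x (p.2 + k)) := by
    intro k
    apply Finset.sum_subset
    · intro p hp
      simp only [Finset.mem_filter, Finset.mem_univ, true_and] at hp ⊢
      tauto
    · intro p hp hnp
      simp only [Finset.mem_filter, Finset.mem_univ, true_and] at hp hnp
      obtain ⟨h1, h2, h3, h4⟩ := hp
      have h5 : ¬ p.1.val < K - 2 := fun hlt => hnp ⟨h1, h2, hlt, h3, h4⟩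
      have h6 := p.2.isLt
      rw [Nat.odd_iff] at h1
      rw [Nat.even_iff] at h4
      have h7 : p.1.val = K - 2 := by omega
      have h8 : (p.1.val : ℝ) = (K : ℝ) - 2 := by
        rw [h7, Nat.cast_sub (show 2 ≤ K by omega)]; norm_num
      rw [h8]; ring
  rw [Finset.sum_congr rfl fun k _ => step1 k]
  rw [← Finset.sum_product']
  simp only [f3]
  rw [Finset.mul_sum]
  have step3 : ∀ t ∈ Finset.univ.filter
      (fun t : Fin K × Fin K × Fin K =>
        t.1 < t.2.1 ∧ t.2.1 < t.2.2 ∧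
        Odd (t.2.1.val - t.1.val) ∧ Odd (t.2.2.val - t.2.1.val)),
      ((K : ℝ) - 3) * (x t.1 * x t.2.1 * x t.2.2)
        = ∑ r : Fin 3, (((K : ℝ) - (wv3 K t r : ℕ) - 2) / 2) * (x t.1 * x t.2.1 * x t.2.2) := by
    intro t ht
    simp only [Finset.mem_filter, Finset.mem_univ, true_and, Fin.lt_def] at ht
    obtain ⟨h01, h12, -, -⟩ := ht
    have hlt := t.2.2.isLt
    have hv : wv3 K t 0 + wv3 K t 1 + wv3 K t 2 = K := by
      simp only [wv3, Matrix.cons_val_zero, Matrix.cons_val_one, Matrix.head_cons,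
        Matrix.cons_val_two, Matrix.tail_cons]
      omega
    have hc : ((wv3 K t 0 : ℕ) : ℝ) + ((wv3 K t 1 : ℕ) : ℝ) + ((wv3 K t 2 : ℕ) : ℝ) = (K : ℝ) := by
      exact_mod_cast congrArg (fun n : ℕ => (n : ℝ)) hv
    rw [Fin.sum_univ_three]
    linear_combination ((x t.1 * x t.2.1 * x t.2.2) / 2) * hc
  rw [Finset.sum_congr rfl step3]
  rw [← Finset.sum_product']
  symm
  apply Finset.sum_nbij' (psi3 K) (phi3 K)
  · rintro ⟨⟨j0, j1, j2⟩, r⟩ hp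
    simp only [Finset.mem_product, Finset.mem_filter, Finset.mem_univ, true_and, and_true,
      Fin.lt_def] at hp
    obtain ⟨h01, h12, ho1, ho2⟩ := hp
    have s10 := subval j1 j0
    have s20 := subval j2 j0
    have s21 := subval j2 j1
    have s01 := subval j0 j1
    have s02 := subval j0 j2
    have s12 := subval j1 j2
    rw [Nat.odd_iff] at ho1 ho2
    fin_cases r <;>
      simp only [psi3, Fin.reduceFinMk, Fin.isValue, Matrix.cons_val_zero, Matrix.cons_val_one,
        Matrix.head_cons, Matrix.cons_val_two, Matrix.tail_cons, Finset.mem_product,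
        Finset.mem_filter, Finset.mem_univ, true_and, Nat.odd_iff, Nat.even_iff] <;>
      omega
  · rintro ⟨k, i1, i2⟩ hq
    simp only [Finset.mem_product, Finset.mem_filter, Finset.mem_univ, true_and, and_true] at hq
    obtain ⟨ho1, h1, hlt, he2⟩ := hq
    have a1 := addval i1 k
    have a2 := addval i2 k
    rw [Nat.odd_iff] at ho1
    rw [Nat.even_iff] at he2
    unfold phi3
    dsimp only
    split_ifs with hb1 hb2
    · simp only [Finset.mem_product, Finset.mem_filter, Finset.mem_univ, true_and, and_true,
        Fin.lt_def, Nat.odd_iff] at hb1 hb2 ⊢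
      omega
    · simp only [Finset.mem_product, Finset.mem_filter, Finset.mem_univ, true_and, and_true,
        Fin.lt_def, not_lt, Nat.odd_iff] at hb1 hb2 ⊢
      omega
    · simp only [Finset.mem_product, Finset.mem_filter, Finset.mem_univ, true_and, and_true,
        Fin.lt_def, not_lt, Nat.odd_iff] at hb1 ⊢
      omega
  · rintro ⟨⟨j0, j1, j2⟩, r⟩ hp
    simp only [Finset.mem_product, Finset.mem_filter, Finset.mem_univ, true_and, and_true] at hp
    obtain ⟨h01, h12, -, -⟩ := hp
    rw [Fin.lt_def] at h01 h12
    fin_cases r <;>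
      simp only [psi3, phi3, Fin.reduceFinMk, Fin.isValue, Matrix.cons_val_zero,
        Matrix.cons_val_one, Matrix.head_cons, Matrix.cons_val_two, Matrix.tail_cons,
        sub_add_cancel] <;>
      split_ifs <;>
      first
        | rfl
        | (exfalso; simp only [Fin.lt_def, not_lt] at *; omega)
  · rintro ⟨k, i1, i2⟩ hq
    unfold phi3
    split_ifs <;>
      simp [psi3, add_sub_cancel_right]
  · rintro ⟨⟨j0, j1, j2⟩, r⟩ hp
    simp only [Finset.mem_product, Finset.mem_filter, Finset.mem_univ, true_and, and_true] at hp
    obtain ⟨h01, h12, -, -⟩ := hp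
    rw [Fin.lt_def] at h01 h12
    have s10 := subval j1 j0
    have s21 := subval j2 j1
    have s02 := subval j0 j2
    fin_cases r
    · simp only [psi3, wv3, Fin.reduceFinMk, Fin.isValue, Matrix.cons_val_zero, Matrix.cons_val_one,
        Matrix.head_cons, Matrix.cons_val_two, Matrix.tail_cons, sub_add_cancel]
      have e1 : (j1 - j0).val = j1.val - j0.val := by omega
      rw [e1]
      all_goals ring
    · simp only [psi3, wv3, Fin.reduceFinMk, Fin.isValue, Matrix.cons_val_zero, Matrix.cons_val_one,
        Matrix.head_cons, Matrix.cons_val_two, Matrix.tail_cons, sub_add_cancel]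
      have e1 : (j2 - j1).val = j2.val - j1.val := by omega
      rw [e1]
      all_goals ring
    · simp only [psi3, wv3, Fin.reduceFinMk, Fin.isValue, Matrix.cons_val_zero, Matrix.cons_val_one,
        Matrix.head_cons, Matrix.cons_val_two, Matrix.tail_cons, sub_add_cancel]
      have e1 : (j0 - j2).val = K - (j2.val - j0.val) := by omega
      rw [e1]
      all_goals ring

def wv5 (K : ℕ) (t : Fin K × Fin K × Fin K × Fin K × Fin K) : Fin 5 → ℕ :=
  ![t.2.1.val - t.1.val, t.2.2.1.val - t.2.1.val, t.2.2.2.1.val - t.2.2.1.val,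
    t.2.2.2.2.val - t.2.2.2.1.val, K - (t.2.2.2.2.val - t.1.val)]

def psi5 (K : ℕ) [NeZero K] (p : (Fin K × Fin K × Fin K × Fin K × Fin K) × Fin 5) :
    Fin K × Fin K × Fin K × Fin K × Fin K :=
  ![(p.1.1, p.1.2.1 - p.1.1, p.1.2.2.1 - p.1.1, p.1.2.2.2.1 - p.1.1, p.1.2.2.2.2 - p.1.1),
    (p.1.2.1, p.1.2.2.1 - p.1.2.1, p.1.2.2.2.1 - p.1.2.1, p.1.2.2.2.2 - p.1.2.1,
      p.1.1 - p.1.2.1),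
    (p.1.2.2.1, p.1.2.2.2.1 - p.1.2.2.1, p.1.2.2.2.2 - p.1.2.2.1, p.1.1 - p.1.2.2.1,
      p.1.2.1 - p.1.2.2.1),
    (p.1.2.2.2.1, p.1.2.2.2.2 - p.1.2.2.2.1, p.1.1 - p.1.2.2.2.1, p.1.2.1 - p.1.2.2.2.1,
      p.1.2.2.1 - p.1.2.2.2.1),
    (p.1.2.2.2.2, p.1.1 - p.1.2.2.2.2, p.1.2.1 - p.1.2.2.2.2, p.1.2.2.1 - p.1.2.2.2.2,
      p.1.2.2.2.1 - p.1.2.2.2.2)] p.2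

def phi5 (K : ℕ) [NeZero K] (q : Fin K × Fin K × Fin K × Fin K × Fin K) :
    (Fin K × Fin K × Fin K × Fin K × Fin K) × Fin 5 :=
  if q.1 < q.2.1 + q.1 then
    if q.2.1 + q.1 < q.2.2.1 + q.1 then
      if q.2.2.1 + q.1 < q.2.2.2.1 + q.1 then
        if q.2.2.2.1 + q.1 < q.2.2.2.2 + q.1 then
          ((q.1, q.2.1 + q.1, q.2.2.1 + q.1, q.2.2.2.1 + q.1, q.2.2.2.2 + q.1), 0)
        else ((q.2.2.2.2 + q.1, q.1, q.2.1 + q.1, q.2.2.1 + q.1, q.2.2.2.1 + q.1), 1)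
      else ((q.2.2.2.1 + q.1, q.2.2.2.2 + q.1, q.1, q.2.1 + q.1, q.2.2.1 + q.1), 2)
    else ((q.2.2.1 + q.1, q.2.2.2.1 + q.1, q.2.2.2.2 + q.1, q.1, q.2.1 + q.1), 3)
  else ((q.2.1 + q.1, q.2.2.1 + q.1, q.2.2.2.1 + q.1, q.2.2.2.2 + q.1, q.1), 4)

set_option maxHeartbeats 2000000 in
theorem part2 (K : ℕ) (hK : 3 ≤ K) (hKodd : Odd K) (x : Fin K → ℝ) :
    (∑ k : Fin K, ∑ t ∈ Finset.univ.filter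
        (fun t : Fin K × Fin K × Fin K × Fin K =>
          Odd t.1.val ∧ 1 ≤ t.1.val ∧ t.1.val < K - 2 ∧
          t.1.val < t.2.1.val ∧ t.2.1.val < t.2.2.1.val ∧ t.2.2.1.val < t.2.2.2.val ∧
          Even t.2.1.val ∧ Odd t.2.2.1.val ∧ Even t.2.2.2.val),
      (((K : ℝ) - t.1.val - 2) / 2) *
        (x k * x (t.1 + k) * x (t.2.1 + k) * x (t.2.2.1 + k) * x (t.2.2.2 + k)))
      = (2 * (K : ℝ) - 5) * f5 K x := by
  haveI : NeZero K := ⟨by omega⟩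
  have hK2 : K % 2 = 1 := Nat.odd_iff.mp hKodd
  rw [← Finset.sum_product']
  simp only [f5]
  rw [Finset.mul_sum]
  have step3 : ∀ t ∈ Finset.univ.filter
      (fun t : Fin K × Fin K × Fin K × Fin K × Fin K =>
        t.1 < t.2.1 ∧ t.2.1 < t.2.2.1 ∧ t.2.2.1 < t.2.2.2.1 ∧ t.2.2.2.1 < t.2.2.2.2 ∧
        Odd (t.2.1.val - t.1.val) ∧ Odd (t.2.2.1.val - t.2.1.val) ∧
        Odd (t.2.2.2.1.val - t.2.2.1.val) ∧ Odd (t.2.2.2.2.val - t.2.2.2.1.val)),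
      (2 * (K : ℝ) - 5) * (x t.1 * x t.2.1 * x t.2.2.1 * x t.2.2.2.1 * x t.2.2.2.2)
        = ∑ r : Fin 5, (((K : ℝ) - (wv5 K t r : ℕ) - 2) / 2) *
            (x t.1 * x t.2.1 * x t.2.2.1 * x t.2.2.2.1 * x t.2.2.2.2) := by
    intro t ht
    simp only [Finset.mem_filter, Finset.mem_univ, true_and, Fin.lt_def] at ht
    obtain ⟨h01, h12, h23, h34, -, -, -, -⟩ := ht
    have hlt := t.2.2.2.2.isLt
    have hv : wv5 K t 0 + wv5 K t 1 + wv5 K t 2 + wv5 K t 3 + wv5 K t 4 = K := by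
      simp only [wv5, Matrix.cons_val_zero, Matrix.cons_val_one, Matrix.head_cons,
        Matrix.cons_val_two, Matrix.cons_val_three, Matrix.cons_val_four, Matrix.tail_cons]
      omega
    have hc : ((wv5 K t 0 : ℕ) : ℝ) + ((wv5 K t 1 : ℕ) : ℝ) + ((wv5 K t 2 : ℕ) : ℝ)
        + ((wv5 K t 3 : ℕ) : ℝ) + ((wv5 K t 4 : ℕ) : ℝ) = (K : ℝ) := by
      exact_mod_cast congrArg (fun n : ℕ => (n : ℝ)) hv
    rw [Fin.sum_univ_five]
    linear_combination ((x t.1 * x t.2.1 * x t.2.2.1 * x t.2.2.2.1 * x t.2.2.2.2) / 2) * hc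
  rw [Finset.sum_congr rfl step3]
  rw [← Finset.sum_product']
  symm
  apply Finset.sum_nbij' (psi5 K) (phi5 K)
  · rintro ⟨⟨j0, j1, j2, j3, j4⟩, r⟩ hp
    simp only [Finset.mem_product, Finset.mem_filter, Finset.mem_univ, true_and, and_true,
      Fin.lt_def] at hp
    obtain ⟨h01, h12, h23, h34, ho1, ho2, ho3, ho4⟩ := hp
    rw [Nat.odd_iff] at ho1 ho2 ho3 ho4
    fin_cases r
    · have sv0 := subval j1 j0
      have sv1 := subval j2 j0
      have sv2 := subval j3 j0
      have sv3 := subval j4 j0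
      simp only [psi5, Fin.reduceFinMk, Fin.isValue, Matrix.cons_val_zero, Matrix.cons_val_one,
        Matrix.head_cons, Matrix.cons_val_two, Matrix.cons_val_three, Matrix.cons_val_four,
        Matrix.tail_cons, Finset.mem_product, Finset.mem_filter, Finset.mem_univ, true_and,
        Nat.odd_iff, Nat.even_iff]
      omega
    · have sv0 := subval j2 j1
      have sv1 := subval j3 j1
      have sv2 := subval j4 j1
      have sv3 := subval j0 j1
      simp only [psi5, Fin.reduceFinMk, Fin.isValue, Matrix.cons_val_zero, Matrix.cons_val_one,
        Matrix.head_cons, Matrix.cons_val_two, Matrix.cons_val_three, Matrix.cons_val_four,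
        Matrix.tail_cons, Finset.mem_product, Finset.mem_filter, Finset.mem_univ, true_and,
        Nat.odd_iff, Nat.even_iff]
      omega
    · have sv0 := subval j3 j2
      have sv1 := subval j4 j2
      have sv2 := subval j0 j2
      have sv3 := subval j1 j2
      simp only [psi5, Fin.reduceFinMk, Fin.isValue, Matrix.cons_val_zero, Matrix.cons_val_one,
        Matrix.head_cons, Matrix.cons_val_two, Matrix.cons_val_three, Matrix.cons_val_four,
        Matrix.tail_cons, Finset.mem_product, Finset.mem_filter, Finset.mem_univ, true_and,
        Nat.odd_iff, Nat.even_iff]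
      omega
    · have sv0 := subval j4 j3
      have sv1 := subval j0 j3
      have sv2 := subval j1 j3
      have sv3 := subval j2 j3
      simp only [psi5, Fin.reduceFinMk, Fin.isValue, Matrix.cons_val_zero, Matrix.cons_val_one,
        Matrix.head_cons, Matrix.cons_val_two, Matrix.cons_val_three, Matrix.cons_val_four,
        Matrix.tail_cons, Finset.mem_product, Finset.mem_filter, Finset.mem_univ, true_and,
        Nat.odd_iff, Nat.even_iff]
      omega
    · have sv0 := subval j0 j4
      have sv1 := subval j1 j4
      have sv2 := subval j2 j4
      have sv3 := subval j3 j4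
      simp only [psi5, Fin.reduceFinMk, Fin.isValue, Matrix.cons_val_zero, Matrix.cons_val_one,
        Matrix.head_cons, Matrix.cons_val_two, Matrix.cons_val_three, Matrix.cons_val_four,
        Matrix.tail_cons, Finset.mem_product, Finset.mem_filter, Finset.mem_univ, true_and,
        Nat.odd_iff, Nat.even_iff]
      omega
  · rintro ⟨k, i1, i2, i3, i4⟩ hq
    simp only [Finset.mem_product, Finset.mem_filter, Finset.mem_univ, true_and, and_true] at hq
    obtain ⟨ho1, h1, hK2', h12, h23, h34, he2, ho3, he4⟩ := hq
    have a1 := addval i1 k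
    have a2 := addval i2 k
    have a3 := addval i3 k
    have a4 := addval i4 k
    rw [Nat.odd_iff] at ho1 ho3
    rw [Nat.even_iff] at he2 he4
    unfold phi5
    dsimp only
    split_ifs with hb1 hb2 hb3 hb4
    · simp only [Finset.mem_product, Finset.mem_filter, Finset.mem_univ, true_and, and_true,
        Fin.lt_def, not_lt, Nat.odd_iff] at hb1 hb2 hb3 hb4 ⊢
      omega
    · simp only [Finset.mem_product, Finset.mem_filter, Finset.mem_univ, true_and, and_true,
        Fin.lt_def, not_lt, Nat.odd_iff] at hb1 hb2 hb3 hb4 ⊢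
      omega
    · simp only [Finset.mem_product, Finset.mem_filter, Finset.mem_univ, true_and, and_true,
        Fin.lt_def, not_lt, Nat.odd_iff] at hb1 hb2 hb3 ⊢
      omega
    · simp only [Finset.mem_product, Finset.mem_filter, Finset.mem_univ, true_and, and_true,
        Fin.lt_def, not_lt, Nat.odd_iff] at hb1 hb2 ⊢
      omega
    · simp only [Finset.mem_product, Finset.mem_filter, Finset.mem_univ, true_and, and_true,
        Fin.lt_def, not_lt, Nat.odd_iff] at hb1 ⊢
      omega
  · rintro ⟨⟨j0, j1, j2, j3, j4⟩, r⟩ hp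
    simp only [Finset.mem_product, Finset.mem_filter, Finset.mem_univ, true_and, and_true] at hp
    obtain ⟨h01, h12, h23, h34, -, -, -, -⟩ := hp
    rw [Fin.lt_def] at h01 h12 h23 h34
    fin_cases r <;>
      simp only [psi5, phi5, Fin.reduceFinMk, Fin.isValue, Matrix.cons_val_zero,
        Matrix.cons_val_one, Matrix.head_cons, Matrix.cons_val_two, Matrix.cons_val_three,
        Matrix.cons_val_four, Matrix.tail_cons, sub_add_cancel] <;>
      split_ifs <;>
      first
        | rfl
        | (exfalso; simp only [Fin.lt_def, not_lt] at *; omega)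
  · rintro ⟨k, i1, i2, i3, i4⟩ hq
    unfold phi5
    split_ifs <;>
      simp [psi5, add_sub_cancel_right]
  · rintro ⟨⟨j0, j1, j2, j3, j4⟩, r⟩ hp
    simp only [Finset.mem_product, Finset.mem_filter, Finset.mem_univ, true_and, and_true] at hp
    obtain ⟨h01, h12, h23, h34, -, -, -, -⟩ := hp
    rw [Fin.lt_def] at h01 h12 h23 h34
    have s10 := subval j1 j0
    have s21 := subval j2 j1
    have s32 := subval j3 j2
    have s43 := subval j4 j3
    have s04 := subval j0 j4
    fin_cases r
    · simp only [psi5, wv5, Fin.reduceFinMk, Fin.isValue, Matrix.cons_val_zero,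
        Matrix.cons_val_one, Matrix.head_cons, Matrix.cons_val_two, Matrix.cons_val_three,
        Matrix.cons_val_four, Matrix.tail_cons, sub_add_cancel]
      have e1 : (j1 - j0).val = j1.val - j0.val := by omega
      rw [e1]
      all_goals ring
    · simp only [psi5, wv5, Fin.reduceFinMk, Fin.isValue, Matrix.cons_val_zero,
        Matrix.cons_val_one, Matrix.head_cons, Matrix.cons_val_two, Matrix.cons_val_three,
        Matrix.cons_val_four, Matrix.tail_cons, sub_add_cancel]
      have e1 : (j2 - j1).val = j2.val - j1.val := by omega
      rw [e1]
      all_goals ring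
    · simp only [psi5, wv5, Fin.reduceFinMk, Fin.isValue, Matrix.cons_val_zero,
        Matrix.cons_val_one, Matrix.head_cons, Matrix.cons_val_two, Matrix.cons_val_three,
        Matrix.cons_val_four, Matrix.tail_cons, sub_add_cancel]
      have e1 : (j3 - j2).val = j3.val - j2.val := by omega
      rw [e1]
      all_goals ring
    · simp only [psi5, wv5, Fin.reduceFinMk, Fin.isValue, Matrix.cons_val_zero,
        Matrix.cons_val_one, Matrix.head_cons, Matrix.cons_val_two, Matrix.cons_val_three,
        Matrix.cons_val_four, Matrix.tail_cons, sub_add_cancel]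
      have e1 : (j4 - j3).val = j4.val - j3.val := by omega
      rw [e1]
      all_goals ring
    · simp only [psi5, wv5, Fin.reduceFinMk, Fin.isValue, Matrix.cons_val_zero,
        Matrix.cons_val_one, Matrix.head_cons, Matrix.cons_val_two, Matrix.cons_val_three,
        Matrix.cons_val_four, Matrix.tail_cons, sub_add_cancel]
      have e1 : (j0 - j4).val = K - (j4.val - j0.val) := by omega
      rw [e1]
      all_goals ring

/-- **Corollary 16**: for every odd `K ≥ 3` and every `x ∈ ℝ^K` (indices mod `K`):
(i) `Σ_k Σ_{i1 odd, 1 ≤ i1 < K-2} ((K-i1-2)/2) Σ_{i1<i2<K, i2 even}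
      x_k x_{i1+k} x_{i2+k} = (K-3)·f3^(K)(x)`;
(ii) `Σ_k Σ_{i1 odd, 1 ≤ i1 < K-2} ((K-i1-2)/2) Σ_{i1<i2<i3<i4<K, i2,i4 even, i3 odd}
      x_k x_{i1+k} x_{i2+k} x_{i3+k} x_{i4+k} = (2K-5)·f5^(K)(x)`. -/
theorem fancy_sum_f3_f5 (K : ℕ) (hK : 3 ≤ K) (hKodd : Odd K) (x : Fin K → ℝ) :
    (∑ k : Fin K, ∑ p ∈ Finset.univ.filter
        (fun p : Fin K × Fin K =>
          Odd p.1.val ∧ 1 ≤ p.1.val ∧ p.1.val < K - 2 ∧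
          p.1.val < p.2.val ∧ Even p.2.val),
      (((K : ℝ) - p.1.val - 2) / 2) * (x k * x (p.1 + k) * x (p.2 + k))
      = ((K : ℝ) - 3) * f3 K x) ∧
    (∑ k : Fin K, ∑ t ∈ Finset.univ.filter
        (fun t : Fin K × Fin K × Fin K × Fin K =>
          Odd t.1.val ∧ 1 ≤ t.1.val ∧ t.1.val < K - 2 ∧
          t.1.val < t.2.1.val ∧ t.2.1.val < t.2.2.1.val ∧ t.2.2.1.val < t.2.2.2.val ∧
          Even t.2.1.val ∧ Odd t.2.2.1.val ∧ Even t.2.2.2.val),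
      (((K : ℝ) - t.1.val - 2) / 2) *
        (x k * x (t.1 + k) * x (t.2.1 + k) * x (t.2.2.1 + k) * x (t.2.2.2 + k))
      = (2 * (K : ℝ) - 5) * f5 K x) := by
  exact ⟨part1 K hK hKodd x, part2 K hK hKodd x⟩
end

section
/- Let K ≥ 3 be odd. For every i ∈ {0,…,K−1} and every k with 0 ≤ k < K, the expectation of the product Δ_i Δ_{i+1} ⋯ Δ_{i+k} of k+1 cyclically consecutive gap increments (indices mod K) equals 0 if k is even, and equals (−1/4)^{(k+1)/2} if k is odd. -/
/-- The random gap-increment vector: given independent fair bits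
`M : Fin K → Fin 2` (each token moves iff its bit is `1`),
`Δ_i = M_{(i+1) mod K} - M_i`.  Expectations over `M` are uniform averages over the
`2^K` outcomes. -/
noncomputable def gapIncr (K : ℕ) (M : Fin K → Fin 2) (i : Fin K) : ℝ :=
  ((M (finRotate K i)).val : ℝ) - ((M i).val : ℝ)

def gidx (K : ℕ) (i : Fin K) (j : ℕ) : Fin K := ⟨(i.val + j) % K, Nat.mod_lt _ i.pos⟩

lemma finRotate_gidx (K : ℕ) (i : Fin K) (j : ℕ) :
    finRotate K (gidx K i j) = gidx K i (j + 1) := by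
  cases K with
  | zero => exact i.elim0
  | succ K' =>
    rw [finRotate_succ_apply]
    apply Fin.ext
    simp only [gidx, Fin.add_def, Fin.val_one']
    rw [← Nat.add_mod, ← add_assoc]

lemma gidx_inj (K : ℕ) (i : Fin K) {a b : ℕ} (ha : a < K) (hb : b < K)
    (h : gidx K i a = gidx K i b) : a = b := by
  have hval : (i.val + a) % K = (i.val + b) % K := congrArg Fin.val h
  have : a % K = b % K := Nat.ModEq.add_left_cancel' i.val hval
  rwa [Nat.mod_eq_of_lt ha, Nat.mod_eq_of_lt hb] at this

lemma flip_invol {K : ℕ} (c : Fin K) :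
    Function.Involutive (fun M : Fin K → Fin 2 => Function.update M c (M c + 1)) := by
  intro M
  simp only [Function.update_self, Function.update_idem]
  have h2 : ∀ x : Fin 2, x + 1 + 1 = x := by decide
  rw [h2, Function.update_eq_self]

lemma sum_mul_coord {K : ℕ} (c : Fin K) (f : (Fin K → Fin 2) → ℝ)
    (hf : ∀ M b, f (Function.update M c b) = f M) (g : Fin 2 → ℝ) :
    ∑ M : Fin K → Fin 2, f M * g (M c)
      = (g 0 + g 1) / 2 * ∑ M : Fin K → Fin 2, f M := by
  have key : ∑ M : Fin K → Fin 2, f M * g (M c + 1)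
      = ∑ M : Fin K → Fin 2, f M * g (M c) := by
    refine Fintype.sum_bijective _ (flip_invol c).bijective _ _ (fun M => ?_)
    simp [hf, Function.update_self]
  have h2 : ∀ x : Fin 2, g x + g (x + 1) = g 0 + g 1 := by
    intro x
    fin_cases x
    · rfl
    · show g 1 + g (1 + 1) = g 0 + g 1
      have : (1 + 1 : Fin 2) = 0 := rfl
      rw [this, add_comm]
  have : (2 : ℝ) * ∑ M : Fin K → Fin 2, f M * g (M c)
      = (g 0 + g 1) * ∑ M : Fin K → Fin 2, f M := by
    calc (2:ℝ) * ∑ M : Fin K → Fin 2, f M * g (M c)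
        = (∑ M : Fin K → Fin 2, f M * g (M c))
          + ∑ M : Fin K → Fin 2, f M * g (M c + 1) := by rw [key]; ring
      _ = ∑ M : Fin K → Fin 2, f M * (g (M c) + g (M c + 1)) := by
          rw [← Finset.sum_add_distrib]; apply Finset.sum_congr rfl; intros; ring
      _ = ∑ M : Fin K → Fin 2, f M * (g 0 + g 1) := by
          apply Finset.sum_congr rfl; intros; rw [h2]
      _ = (g 0 + g 1) * ∑ M : Fin K → Fin 2, f M := by
          rw [Finset.mul_sum]; apply Finset.sum_congr rfl; intros; ring
  linarith

noncomputable def prodD (K : ℕ) (i : Fin K) (n : ℕ) (M : Fin K → Fin 2) : ℝ :=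
  ∏ j ∈ Finset.range n, gapIncr K M (gidx K i j)

lemma gidx_ne (K : ℕ) (i : Fin K) {a b : ℕ} (ha : a < K) (hb : b < K) (hab : a ≠ b) :
    gidx K i a ≠ gidx K i b := fun h => hab (gidx_inj K i ha hb h)

lemma prodD_update (K : ℕ) (i : Fin K) (n : ℕ) (hn : n + 1 < K) (M : Fin K → Fin 2)
    (b : Fin 2) :
    prodD K i n (Function.update M (gidx K i (n + 1)) b) = prodD K i n M := by
  unfold prodD
  refine Finset.prod_congr rfl (fun j hj => ?_)
  rw [Finset.mem_range] at hj
  unfold gapIncr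
  rw [finRotate_gidx, Function.update_of_ne, Function.update_of_ne]
  · exact gidx_ne K i (by omega) hn (by omega)
  · exact gidx_ne K i (by omega) hn (by omega)

noncomputable def Ssum (K : ℕ) (i : Fin K) (n : ℕ) : ℝ :=
  ∑ M : Fin K → Fin 2, prodD K i n M

noncomputable def Qsum (K : ℕ) (i : Fin K) (n : ℕ) : ℝ :=
  ∑ M : Fin K → Fin 2, prodD K i n M * ((M (gidx K i n)).val : ℝ)

lemma prodD_succ (K : ℕ) (i : Fin K) (n : ℕ) (M : Fin K → Fin 2) :
    prodD K i (n + 1) M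
      = prodD K i n M * (((M (gidx K i (n + 1))).val : ℝ) - ((M (gidx K i n)).val : ℝ)) := by
  unfold prodD
  rw [Finset.prod_range_succ]
  congr 1
  unfold gapIncr
  rw [finRotate_gidx]

lemma Ssum_zero (K : ℕ) (i : Fin K) : Ssum K i 0 = 2 ^ K := by
  unfold Ssum prodD
  simp [Finset.card_univ]

lemma Qsum_zero (K : ℕ) (i : Fin K) : Qsum K i 0 = 2 ^ K / 2 := by
  unfold Qsum
  have := sum_mul_coord (gidx K i 0) (fun _ => (1 : ℝ)) (fun _ _ => rfl)
      (fun b => (b.val : ℝ))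
  simp only [one_mul] at this
  have h1 : ∀ M : Fin K → Fin 2, prodD K i 0 M = 1 := by intro M; simp [prodD]
  calc ∑ M : Fin K → Fin 2, prodD K i 0 M * ((M (gidx K i 0)).val : ℝ)
      = ∑ M : Fin K → Fin 2, ((M (gidx K i 0)).val : ℝ) := by
        apply Finset.sum_congr rfl; intros M _; rw [h1]; ring
    _ = 2 ^ K / 2 := by
        rw [this]; simp [Finset.card_univ]; ring

lemma Ssum_succ (K : ℕ) (i : Fin K) (n : ℕ) (hn : n + 1 < K) :
    Ssum K i (n + 1) = Ssum K i n / 2 - Qsum K i n := by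
  unfold Ssum Qsum
  have expand : ∀ M : Fin K → Fin 2, prodD K i (n + 1) M
      = prodD K i n M * ((M (gidx K i (n + 1))).val : ℝ)
        - prodD K i n M * ((M (gidx K i n)).val : ℝ) := by
    intro M; rw [prodD_succ]; ring
  rw [Finset.sum_congr rfl (fun M _ => expand M), Finset.sum_sub_distrib]
  have h1 := sum_mul_coord (gidx K i (n + 1)) (prodD K i n)
      (fun M b => prodD_update K i n hn M b) (fun b => (b.val : ℝ))
  rw [h1]
  norm_num
  ring

lemma Qsum_succ (K : ℕ) (i : Fin K) (n : ℕ) (hn : n + 1 < K) :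
    Qsum K i (n + 1) = Ssum K i n / 2 - Qsum K i n / 2 := by
  unfold Ssum Qsum
  have hsq : ∀ b : Fin 2, ((b.val : ℝ)) * (b.val : ℝ) = (b.val : ℝ) := by
    intro b; fin_cases b <;> norm_num
  have expand : ∀ M : Fin K → Fin 2, prodD K i (n + 1) M * ((M (gidx K i (n + 1))).val : ℝ)
      = prodD K i n M * ((M (gidx K i (n + 1))).val : ℝ)
        - (prodD K i n M * ((M (gidx K i n)).val : ℝ)) * ((M (gidx K i (n + 1))).val : ℝ) := by
    intro M
    rw [prodD_succ]
    have h := hsq (M (gidx K i (n + 1)))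
    linear_combination prodD K i n M * h
  rw [Finset.sum_congr rfl (fun M _ => expand M), Finset.sum_sub_distrib]
  have h1 := sum_mul_coord (gidx K i (n + 1)) (prodD K i n)
      (fun M b => prodD_update K i n hn M b) (fun b => (b.val : ℝ))
  have hf2 : ∀ (M : Fin K → Fin 2) (b : Fin 2),
      prodD K i n (Function.update M (gidx K i (n + 1)) b)
        * (((Function.update M (gidx K i (n + 1)) b) (gidx K i n)).val : ℝ)
      = prodD K i n M * ((M (gidx K i n)).val : ℝ) := by
    intro M b
    rw [prodD_update K i n hn, Function.update_of_ne]
    exact gidx_ne K i (by omega) hn (by omega)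
  have h2 := sum_mul_coord (gidx K i (n + 1))
      (fun M => prodD K i n M * ((M (gidx K i n)).val : ℝ)) hf2 (fun b => (b.val : ℝ))
  rw [h1, h2]
  norm_num
  ring

lemma main_induction (K : ℕ) (i : Fin K) :
    ∀ n, n < K →
      (Ssum K i n = if Even n then (2 ^ K : ℝ) * (-(1/4)) ^ (n / 2) else 0)
      ∧ (Qsum K i n = if Even n then (2 ^ K : ℝ) * (-(1/4)) ^ (n / 2) / 2
          else (2 ^ K : ℝ) * (-(1/4)) ^ (n / 2) / 4) := by
  intro n
  induction n with
  | zero =>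
    intro _
    simp [Ssum_zero, Qsum_zero]
  | succ n ih =>
    intro hn
    have hn' : n < K := by omega
    obtain ⟨hS, hQ⟩ := ih hn'
    rw [Ssum_succ K i n hn, Qsum_succ K i n hn, hS, hQ]
    by_cases hpar : Even n
    · have h1 : ¬ Even (n + 1) := by simp [Nat.even_add_one, hpar]
      have h2 : (n + 1) / 2 = n / 2 := by
        obtain ⟨m, rfl⟩ := hpar; omega
      simp only [if_pos hpar, if_neg h1, h2]
      constructor <;> ring
    · have h1 : Even (n + 1) := Nat.even_add_one.mpr hpar
      have h2 : (n + 1) / 2 = n / 2 + 1 := by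
        obtain ⟨m, hm⟩ := Nat.odd_iff.mpr (Nat.not_even_iff.mp hpar); omega
      simp only [if_neg hpar, if_pos h1, h2, pow_succ]
      constructor <;> ring

lemma gidx_K (K : ℕ) (i : Fin K) : gidx K i K = gidx K i 0 := by
  apply Fin.ext
  simp [gidx, Nat.add_mod_right]

lemma prodD_cycle_zero (K : ℕ) (hodd : Odd K) (i : Fin K) (M : Fin K → Fin 2) :
    prodD K i K M = 0 := by
  by_contra h
  have hne : ∀ j ∈ Finset.range K, gapIncr K M (gidx K i j) ≠ 0 := by
    intro j hj hzero
    exact h (Finset.prod_eq_zero hj hzero)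
  set g : ℕ → ZMod 2 := fun j => ((M (gidx K i j)).val : ZMod 2) with hg
  have hdiff : ∀ j ∈ Finset.range K, g (j + 1) - g j = 1 := by
    intro j hj
    have h0 := hne j hj
    unfold gapIncr at h0
    rw [finRotate_gidx] at h0
    have hne2 : M (gidx K i (j + 1)) ≠ M (gidx K i j) := by
      intro he; rw [he] at h0; simp at h0
    revert hne2
    simp only [hg]
    generalize M (gidx K i (j + 1)) = a
    generalize M (gidx K i j) = b
    revert a b; decide
  have hsum : ∑ j ∈ Finset.range K, (g (j + 1) - g j) = g K - g 0 :=
    Finset.sum_range_sub g K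
  rw [Finset.sum_congr rfl hdiff] at hsum
  simp only [Finset.sum_const, Finset.card_range, nsmul_eq_mul, mul_one] at hsum
  have hK0 : g K = g 0 := by rw [hg]; simp only [gidx_K]
  rw [hK0, sub_self] at hsum
  have : ((K : ZMod 2)) = 1 := by
    obtain ⟨m, rfl⟩ := hodd
    push_cast
    ring_nf
    simp [show ((2 : ZMod 2)) = 0 from rfl]
  rw [this] at hsum
  exact one_ne_zero hsum


/-- **Correlation of consecutive gap increments** (Property (7)): let `K ≥ 3` be odd.
For every `i ∈ {0,…,K-1}` and every `0 ≤ k < K`, the expectation of the product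
`Δ_i Δ_{i+1} ⋯ Δ_{i+k}` of `k+1` cyclically consecutive gap increments (indices
mod `K`) equals `0` if `k` is even and `(-1/4)^((k+1)/2)` if `k` is odd. -/
theorem gapIncr_consecutive_expectation (K : ℕ) (hK : 3 ≤ K) (hKodd : Odd K)
    (i : Fin K) (k : ℕ) (hk : k < K) :
    (1 / 2 ^ K : ℝ) *
      ∑ M : Fin K → Fin 2, ∏ j ∈ Finset.range (k + 1),
        gapIncr K M ⟨(i.val + j) % K, Nat.mod_lt _ i.pos⟩
    = if Even k then 0 else (-(1 / 4) : ℝ) ^ ((k + 1) / 2) := by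
  have hsum : (∑ M : Fin K → Fin 2, ∏ j ∈ Finset.range (k + 1),
      gapIncr K M ⟨(i.val + j) % K, Nat.mod_lt _ i.pos⟩) = Ssum K i (k + 1) := rfl
  rw [hsum]
  have h2K : (2 : ℝ) ^ K ≠ 0 := by positivity
  by_cases hcase : k + 1 < K
  · obtain ⟨hS, -⟩ := main_induction K i (k + 1) hcase
    rw [hS]
    by_cases hpar : Even k
    · have : ¬ Even (k + 1) := by simp [Nat.even_add_one, hpar]
      rw [if_neg this, if_pos hpar, mul_zero]
    · have : Even (k + 1) := Nat.even_add_one.mpr hpar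
      rw [if_pos this, if_neg hpar]
      field_simp
  · have hkK : k + 1 = K := by omega
    have hS0 : Ssum K i (k + 1) = 0 := by
      rw [hkK]
      unfold Ssum
      rw [Finset.sum_congr rfl (fun M _ => prodD_cycle_zero K hKodd i M)]
      simp
    have hpar : Even k := by
      have : Odd (k + 1) := hkK ▸ hKodd
      rcases Nat.even_or_odd k with h | h
      · exact h
      · exact absurd (Nat.odd_iff.mp h) (by have := Nat.odd_iff.mp this; omega)
    rw [hS0, if_pos hpar, mul_zero]
end
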